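/- arXiv:1103.6132 — 2 statements merged into one kernel-verified Lean document; each statement's English description precedes it below -/
import Mathlib

section
/- Let G be a group and A a (ℤ × G)-graded ring with support in ℕ × G. Let A_{(0,−)} = ⊕_{g∈G} A_{(0,g)}, a graded subring, and let P be a finitely generated (ℤ × G)-graded projective right A-module. Then P is isomorphic as a graded A-module to (P/P·A₊) ⊗_{A_{(0,−)}} A, and componentwise P_{(ω,g)} ≅ ⊕_{κ≤ω, h∈G} T(P)_{(κ,h)} ⊗ A_{(ω−κ, g−h)} where T(P) = P/P·A₊. -/
universe u

/-- The submodule `M·A₊` (for left modules: `A₊·M`) where `A₊ = ⊕_{n>0, g} A_{(n,g)}`. -/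
def posSMulSubmoduleZG {A : Type u} [Ring A] {G : Type u} [AddGroup G]
    (𝒜 : ℤ × G → AddSubgroup A)
    (M : Type u) [AddCommGroup M] [Module A M] : Submodule A M :=
  Submodule.span A {x : M | ∃ n : ℤ, 0 < n ∧ ∃ g : G, ∃ a ∈ 𝒜 (n, g), ∃ m : M, x = a • m}

/-- Universal property of `Q ⊗_{A₀} A` (for left modules, `A ⊗_{A₀} Q`). -/
def IsBaseChangeAlong (A : Type u) [Ring A] (A₀ : Subring A)
    (Q : Type u) [AddCommGroup Q] [Module A₀ Q]
    (E : Type u) [AddCommGroup E] [Module A E] (ι : Q →ₗ[A₀] E) : Prop :=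
  ∀ (N : Type u) [AddCommGroup N] [Module A N] (f : Q →ₗ[A₀] N),
    ∃! F : E →ₗ[A] N, ∀ q : Q, F (ι q) = f q

/-!
Choose a splitting `s` of `A^(P) → P`. Replacing the coefficients of `s p` by their parts of
`ℤ`-degree `0` and then keeping only the degree-preserving part gives a graded, `A₀`-linear
`τ : P → P` that kills `A₊P` and satisfies `p ≡ τ p (mod A₊P)`, i.e. a graded `A₀`-linear section
`σ` of `P → T(P)`. The universal property extends `σ` to a graded `A`-linear `F : E → P`.
Both gradings are bounded below (`P` is finitely generated, `E` is generated by `ι (T(P))`), so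
graded Nakayama applies: `F` is onto since `P = F(E) + A₊P`, and `F` is injective since, splitting
`F` by projectivity of `P`, its kernel `K` is a homogeneous direct summand with `K ⊆ A₊E`, hence
`K = A₊K`.
The componentwise description holds because `E` is generated by the homogeneous `ι (T(P))`.
-/

open DirectSum

section SmulGens

variable {Γ A M : Type*} [AddGroup Γ] [Ring A] [AddCommGroup M] [Module A M]
  (𝒜 : Γ → AddSubgroup A)

def smulGens (T : Γ → Set M) (d : Γ) : Set M :=
  {y | ∃ e, ∃ t ∈ T e, ∃ a ∈ 𝒜 (d - e), y = a • t}

variable {𝒜}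

theorem smul_mem_closure_smulGens [SetLike.GradedMonoid 𝒜] {T : Γ → Set M} {a : A} {i d : Γ}
    (ha : a ∈ 𝒜 i) {y : M} (hy : y ∈ AddSubgroup.closure (smulGens 𝒜 T d)) :
    a • y ∈ AddSubgroup.closure (smulGens 𝒜 T (i + d)) := by
  induction hy using AddSubgroup.closure_induction with
  | mem y hy =>
    obtain ⟨e, t, ht, b, hb, rfl⟩ := hy
    refine AddSubgroup.subset_closure ⟨e, t, ht, a * b, ?_, (mul_smul a b t).symm⟩
    simpa [sub_eq_add_neg, add_assoc] using SetLike.mul_mem_graded ha hb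
  | zero => simp
  | add y z _ _ hy hz => simpa using add_mem hy hz
  | neg y _ hy => simpa using neg_mem hy

theorem LinearMap.apply_mem_of_mem_closure_smulGens {N : Type*} [AddCommGroup N] [Module A N]
    {𝒩 : Γ → AddSubgroup N} [SetLike.GradedSMul 𝒜 𝒩] {T : Γ → Set M} {f : M →ₗ[A] N}
    (hf : ∀ e, ∀ t ∈ T e, f t ∈ 𝒩 e) {d : Γ} {x : M}
    (hx : x ∈ AddSubgroup.closure (smulGens 𝒜 T d)) : f x ∈ 𝒩 d := by
  refine (AddSubgroup.closure_le ((𝒩 d).comap f.toAddMonoidHom)).2 ?_ hx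
  rintro _ ⟨e, t, ht, a, ha, rfl⟩
  simpa using SetLike.GradedSMul.smul_mem ha (hf e t ht)

end SmulGens

section GradedModule

variable {Γ M N : Type*} [DecidableEq Γ] [AddCommGroup M] [AddCommGroup N]
  (ℳ : Γ → AddSubgroup M) [Decomposition ℳ] (𝒩 : Γ → AddSubgroup N) [Decomposition 𝒩]

noncomputable def gradedProj (i : Γ) : M →+ M :=
  (ℳ i).subtype.comp ((DFinsupp.evalAddMonoidHom i).comp (decomposeAddEquiv ℳ).toAddMonoidHom)

@[simp]
theorem gradedProj_apply (i : Γ) (x : M) : gradedProj ℳ i x = decompose ℳ x i := rfl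

theorem gradedProj_mem (i : Γ) (x : M) : gradedProj ℳ i x ∈ ℳ i := (decompose ℳ x i).2

variable {ℳ} in
theorem gradedProj_of_mem_same {i : Γ} {x : M} (hx : x ∈ ℳ i) : gradedProj ℳ i x = x :=
  decompose_of_mem_same ℳ hx

variable {ℳ} in
theorem gradedProj_of_mem_ne {i j : Γ} {x : M} (hx : x ∈ ℳ i) (h : i ≠ j) :
    gradedProj ℳ j x = 0 :=
  decompose_of_mem_ne ℳ hx h

theorem sum_gradedProj [∀ (i : Γ) (y : ℳ i), Decidable (y ≠ 0)] (x : M) :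
    ∑ i ∈ (decompose ℳ x).support, gradedProj ℳ i x = x :=
  sum_support_decompose ℳ x

variable {ℳ 𝒩} in
theorem gradedProj_map_of_mem {f : M →+ N} (hf : ∀ i x, x ∈ ℳ i → f x ∈ 𝒩 i) (i : Γ) (x : M) :
    gradedProj 𝒩 i (f x) = f (gradedProj ℳ i x) := by
  induction x using Decomposition.inductionOn ℳ with
  | zero => simp
  | @homogeneous j m =>
    obtain rfl | hji := eq_or_ne j i
    · rw [gradedProj_of_mem_same m.2, gradedProj_of_mem_same (hf _ _ m.2)]
    · rw [gradedProj_of_mem_ne m.2 hji, gradedProj_of_mem_ne (hf _ _ m.2) hji, map_zero]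
  | add x y hx hy => simp only [map_add, hx, hy]

noncomputable def gradedPart (f : M →+ M) : M →+ M :=
  (toAddMonoid fun i => (gradedProj ℳ i).comp (f.comp (ℳ i).subtype)).comp
    (decomposeAddEquiv ℳ).toAddMonoidHom

variable {ℳ}

theorem gradedPart_of_mem (f : M →+ M) {i : Γ} {x : M} (hx : x ∈ ℳ i) :
    gradedPart ℳ f x = gradedProj ℳ i (f x) := by
  change toAddMonoid _ (decompose ℳ x) = _
  rw [decompose_of_mem ℳ hx, toAddMonoid_of]
  rfl

theorem gradedPart_mem (f : M →+ M) {i : Γ} {x : M} (hx : x ∈ ℳ i) : gradedPart ℳ f x ∈ ℳ i :=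
  gradedPart_of_mem f hx ▸ gradedProj_mem ℳ i (f x)

theorem sub_gradedPart_mem {σ : Type*} [SetLike σ M] [AddSubgroupClass σ M] {f : M →+ M} {S : σ}
    (hS : SetLike.IsHomogeneous ℳ S)
    (hf : ∀ x, x - f x ∈ S) (x : M) : x - gradedPart ℳ f x ∈ S := by
  induction x using Decomposition.inductionOn ℳ with
  | zero => simp
  | @homogeneous i m =>
    rw [gradedPart_of_mem f m.2]
    simpa [gradedProj_of_mem_same m.2] using hS i (hf m)
  | add x y hx hy => simpa [add_sub_add_comm] using add_mem hx hy

theorem gradedPart_eq_zero {σ : Type*} [SetLike σ M] [AddSubgroupClass σ M] {f : M →+ M} {S : σ}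
    (hS : SetLike.IsHomogeneous ℳ S)
    (hf : ∀ x ∈ S, f x = 0) {x : M} (hx : x ∈ S) : gradedPart ℳ f x = 0 := by
  classical
  rw [← sum_gradedProj ℳ x, map_sum]
  exact Finset.sum_eq_zero fun i _ => by
    rw [gradedPart_of_mem f (gradedProj_mem ℳ i x), hf _ (by simpa using hS i hx), map_zero]

variable {A : Type*} [Ring A] [Module A M]

theorem span_iUnion_image_eq (φ : N →+ M) :
    Submodule.span A (⋃ i, φ '' 𝒩 i) = Submodule.span A (Set.range φ) := by
  classical
  refine le_antisymm (Submodule.span_mono (Set.iUnion_subset fun i => Set.image_subset_range _ _))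
    (Submodule.span_le.2 ?_)
  rintro _ ⟨x, rfl⟩
  rw [← sum_gradedProj 𝒩 x, map_sum]
  exact sum_mem fun i _ => Submodule.subset_span
    (Set.mem_iUnion.2 ⟨i, _, gradedProj_mem 𝒩 i x, rfl⟩)

variable [Module A N] {𝒩}

theorem LinearMap.isHomogeneous_ker {f : M →ₗ[A] N} (hf : ∀ i x, x ∈ ℳ i → f x ∈ 𝒩 i) :
    (LinearMap.ker f).IsHomogeneous ℳ := fun i x hx => by
  have := gradedProj_map_of_mem (f := f.toAddMonoidHom) hf i x
  simp_all

theorem LinearMap.isHomogeneous_range {f : M →ₗ[A] N} (hf : ∀ i x, x ∈ ℳ i → f x ∈ 𝒩 i) :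
    (LinearMap.range f).IsHomogeneous 𝒩 := by
  rintro i _ ⟨x, rfl⟩
  have := gradedProj_map_of_mem (f := f.toAddMonoidHom) hf i x
  simp_all

theorem LinearEquiv.map_eq_of_apply_mem (e : M ≃ₗ[A] N) (he : ∀ i x, x ∈ ℳ i → e x ∈ 𝒩 i)
    (i : Γ) : (ℳ i).map e.toLinearMap.toAddMonoidHom = 𝒩 i := by
  refine le_antisymm (AddSubgroup.map_le_iff_le_comap.2 fun x hx => he i x hx) fun y hy => ?_
  refine ⟨e.symm y, ?_, by simp⟩
  have h := gradedProj_map_of_mem (f := e.toLinearMap.toAddMonoidHom) he i (e.symm y)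
  simp only [LinearMap.toAddMonoidHom_coe, LinearEquiv.coe_coe, LinearEquiv.apply_symm_apply,
    gradedProj_of_mem_same hy] at h
  rw [h, e.symm_apply_apply]
  exact gradedProj_mem ℳ i _

variable [AddGroup Γ] (𝒜 : Γ → AddSubgroup A)
  [SetLike.GradedSMul 𝒜 ℳ]

variable {𝒜} in
theorem gradedProj_smul_of_mem {a : A} {i : Γ} (ha : a ∈ 𝒜 i) (j : Γ) (x : M) :
    gradedProj ℳ j (a • x) = a • gradedProj ℳ (-i + j) x := by
  induction x using Decomposition.inductionOn ℳ with
  | zero => simp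
  | @homogeneous e m =>
    have ham : a • (m : M) ∈ ℳ (i + e) := SetLike.GradedSMul.smul_mem ha m.2
    obtain rfl | he := eq_or_ne e (-i + j)
    · rw [add_neg_cancel_left] at ham
      rw [gradedProj_of_mem_same ham, gradedProj_of_mem_same m.2]
    · rw [gradedProj_of_mem_ne m.2 he, gradedProj_of_mem_ne ham (by rintro rfl; simp at he),
        smul_zero]
  | add x y hx hy => simp only [smul_add, map_add, hx, hy]

variable {𝒜} in
theorem gradedPart_smul_of_mem {f : M →+ M} {a : A} {i : Γ} (ha : a ∈ 𝒜 i)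
    (hf : ∀ x, f (a • x) = a • f x) (x : M) : gradedPart ℳ f (a • x) = a • gradedPart ℳ f x := by
  induction x using Decomposition.inductionOn ℳ with
  | zero => simp
  | @homogeneous e m =>
    rw [gradedPart_of_mem f (SetLike.GradedSMul.smul_mem ha m.2), gradedPart_of_mem f m.2, hf,
      gradedProj_smul_of_mem ha]
    simp only [vadd_eq_add, neg_add_cancel_left]
  | add x y hx hy => simp only [smul_add, map_add, hx, hy]

variable [GradedRing 𝒜]

theorem gradedProj_smul [∀ (i : Γ) (y : 𝒜 i), Decidable (y ≠ 0)] (a : A) (x : M) (j : Γ) :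
    gradedProj ℳ j (a • x) =
      ∑ i ∈ (decompose 𝒜 a).support, gradedProj 𝒜 i a • gradedProj ℳ (-i + j) x := by
  conv_lhs => rw [← sum_gradedProj 𝒜 a, Finset.sum_smul, map_sum]
  exact Finset.sum_congr rfl fun i _ => gradedProj_smul_of_mem (gradedProj_mem 𝒜 i a) j x

theorem eq_closure_smulGens {T : Γ → Set M} (hT : ∀ e, T e ⊆ ℳ e)
    (hspan : Submodule.span A (⋃ e, T e) = ⊤) (d : Γ) :
    ℳ d = AddSubgroup.closure (smulGens 𝒜 T d) := by
  classical
  refine le_antisymm (fun y hy => ?_) ((AddSubgroup.closure_le _).2 ?_)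
  · suffices ∀ y : M, ∀ d, gradedProj ℳ d y ∈ AddSubgroup.closure (smulGens 𝒜 T d) by
      simpa [gradedProj_of_mem_same hy] using this y d
    intro y
    induction (hspan.ge trivial : y ∈ Submodule.span A (⋃ e, T e)) using
      Submodule.span_induction with
    | mem t ht =>
      obtain ⟨e, ht⟩ := Set.mem_iUnion.1 ht
      intro d
      obtain rfl | hed := eq_or_ne e d
      · rw [gradedProj_of_mem_same (hT e ht)]
        exact AddSubgroup.subset_closure
          ⟨e, t, ht, 1, by simpa using SetLike.one_mem_graded 𝒜, (one_smul A t).symm⟩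
      · simp [gradedProj_of_mem_ne (hT e ht) hed]
    | zero => simp
    | add y z _ _ hy hz => exact fun d => by simpa using add_mem (hy d) (hz d)
    | smul a y _ hy =>
      intro d
      rw [gradedProj_smul 𝒜]
      refine sum_mem fun i _ => ?_
      simpa using smul_mem_closure_smulGens (gradedProj_mem 𝒜 i a) (hy (-i + d))
  · rintro y ⟨e, t, ht, a, ha, rfl⟩
    simpa using SetLike.GradedSMul.smul_mem ha (hT e ht)

end GradedModule

section NonnegGrading

variable {A G M : Type u} [Ring A] [AddCommGroup M] [Module A M] (𝒜 : ℤ × G → AddSubgroup A)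

variable {𝒜} in
theorem eq_zero_of_mem_of_fst_neg (hsupp : ∀ (n : ℤ) (g : G), n < 0 → 𝒜 (n, g) = ⊥)
    {d : ℤ × G} (hd : d.1 < 0) {a : A} (ha : a ∈ 𝒜 d) : a = 0 := by
  simpa [hsupp d.1 d.2 hd] using ha

def posSMulSpan (N : Submodule A M) : Submodule A M :=
  Submodule.span A {x | ∃ n : ℤ, 0 < n ∧ ∃ g : G, ∃ a ∈ 𝒜 (n, g), ∃ m ∈ N, x = a • m}

theorem map_posSMulSpan_le {M' : Type u} [AddCommGroup M'] [Module A M'] (f : M →ₗ[A] M')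
    {N : Submodule A M} {N' : Submodule A M'} (h : N.map f ≤ N') :
    (posSMulSpan 𝒜 N).map f ≤ posSMulSpan 𝒜 N' := by
  rw [posSMulSpan, Submodule.map_span, Submodule.span_le]
  rintro _ ⟨_, ⟨n, hn, g, a, ha, m, hm, rfl⟩, rfl⟩
  exact Submodule.subset_span
    ⟨n, hn, g, a, ha, f m, h (Submodule.mem_map_of_mem hm), map_smul f a m⟩

variable [AddGroup G]

theorem posSMulSpan_top : posSMulSpan 𝒜 (⊤ : Submodule A M) = posSMulSubmoduleZG 𝒜 M := by
  simp [posSMulSpan, posSMulSubmoduleZG]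

variable [DecidableEq G] [GradedRing 𝒜]

noncomputable def projZero : A →+ A :=
  (toAddMonoid fun d : ℤ × G => if d.1 = 0 then (𝒜 d).subtype else 0).comp
    (decomposeAddEquiv 𝒜).toAddMonoidHom

variable {𝒜} in
theorem projZero_of_mem {d : ℤ × G} {b : A} (hb : b ∈ 𝒜 d) :
    projZero 𝒜 b = if d.1 = 0 then b else 0 := by
  change toAddMonoid _ (decompose 𝒜 b) = _
  rw [decompose_of_mem 𝒜 hb, toAddMonoid_of]
  split_ifs <;> rfl

theorem projZero_mul (hsupp : ∀ (n : ℤ) (g : G), n < 0 → 𝒜 (n, g) = ⊥) (b c : A) :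
    projZero 𝒜 (b * c) = projZero 𝒜 b * projZero 𝒜 c := by
  induction b using Decomposition.inductionOn 𝒜 with
  | zero => simp
  | @homogeneous d b =>
    induction c using Decomposition.inductionOn 𝒜 with
    | zero => simp
    | @homogeneous e c =>
      rw [projZero_of_mem (SetLike.mul_mem_graded b.2 c.2), projZero_of_mem b.2,
        projZero_of_mem c.2]
      by_cases h0 : d.1 = 0 ∧ e.1 = 0
      · simp [h0.1, h0.2]
      · have hbc : (d + e).1 = 0 → (b : A) * c = 0 := fun h => by
          rcases lt_or_ge d.1 0 with hd | hd
          · rw [eq_zero_of_mem_of_fst_neg hsupp hd b.2, zero_mul]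
          · rw [eq_zero_of_mem_of_fst_neg hsupp (d := e) (by simp at h; omega) c.2, mul_zero]
        rw [ite_eq_right_iff.2 hbc]
        by_cases hd : d.1 = 0 <;> simp_all
    | add c c' hc hc' => simp only [mul_add, map_add, hc, hc']
  | add b b' hb hb' => simp only [add_mul, map_add, hb, hb']

noncomputable def projZeroRingHom (hsupp : ∀ (n : ℤ) (g : G), n < 0 → 𝒜 (n, g) = ⊥) : A →+* A :=
  { projZero 𝒜 with
    map_one' := by simpa using projZero_of_mem (SetLike.one_mem_graded 𝒜)
    map_mul' := projZero_mul 𝒜 hsupp }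

@[simp]
theorem projZeroRingHom_apply (hsupp : ∀ (n : ℤ) (g : G), n < 0 → 𝒜 (n, g) = ⊥) (b : A) :
    projZeroRingHom 𝒜 hsupp b = projZero 𝒜 b :=
  rfl

theorem projZero_mem (A₀ : Subring A) (hA₀ : A₀.toAddSubgroup = ⨆ g : G, 𝒜 (0, g)) (b : A) :
    projZero 𝒜 b ∈ A₀ := by
  suffices projZero 𝒜 b ∈ A₀.toAddSubgroup from this
  rw [hA₀]
  induction b using Decomposition.inductionOn 𝒜 with
  | zero => simp
  | @homogeneous d b =>
    rw [projZero_of_mem b.2]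
    split_ifs with h
    · exact AddSubgroup.mem_iSup_of_mem d.2 (by rw [← h]; exact b.2)
    · exact zero_mem _
  | add b b' hb hb' => simpa using add_mem hb hb'

theorem sub_projZero_smul_mem (hsupp : ∀ (n : ℤ) (g : G), n < 0 → 𝒜 (n, g) = ⊥) (b : A)
    (m : M) : (b - projZero 𝒜 b) • m ∈ posSMulSubmoduleZG 𝒜 M := by
  induction b using Decomposition.inductionOn 𝒜 with
  | zero => simp
  | @homogeneous d b =>
    rw [projZero_of_mem b.2]
    split_ifs with h
    · simp
    · rcases lt_or_gt_of_ne h with hd | hd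
      · simp [eq_zero_of_mem_of_fst_neg hsupp hd b.2]
      · exact Submodule.subset_span ⟨d.1, hd, d.2, b, b.2, m, by simp⟩
  | add b b' hb hb' => simpa [add_sub_add_comm, add_smul] using add_mem hb hb'

variable (ℳ : ℤ × G → AddSubgroup M) [Decomposition ℳ] [SetLike.GradedSMul 𝒜 ℳ]

theorem isHomogeneous_posSMulSpan {N : Submodule A M} (hN : N.IsHomogeneous ℳ) :
    (posSMulSpan 𝒜 N).IsHomogeneous ℳ := by
  classical
  intro d x hx
  rw [← gradedProj_apply]
  induction hx using Submodule.span_induction generalizing d with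
  | mem x hx =>
    obtain ⟨n, hn, g, a, ha, m, hm, rfl⟩ := hx
    rw [gradedProj_smul_of_mem ha]
    exact Submodule.subset_span ⟨n, hn, g, a, ha, _, hN _ hm, rfl⟩
  | zero => simp
  | add x y _ _ hx hy => simpa using add_mem (hx d) (hy d)
  | smul b x _ hx =>
    rw [gradedProj_smul 𝒜]
    exact sum_mem fun i _ => Submodule.smul_mem _ _ (hx _)

variable {𝒜} in
/-- The invariant of the induction in graded Nakayama; it is a submodule because `A` has no
components of negative degree. -/
def componentsBelowIn (hsupp : ∀ (n : ℤ) (g : G), n < 0 → 𝒜 (n, g) = ⊥) (S : Submodule A M)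
    (k : ℤ) : Submodule A M where
  carrier := {y | ∀ d : ℤ × G, d.1 < k → gradedProj ℳ d y ∈ S}
  add_mem' hx hy d hd := by simpa using S.add_mem (hx d hd) (hy d hd)
  zero_mem' d _ := by simp
  smul_mem' b y hy d hd := by
    classical
    rw [gradedProj_smul 𝒜]
    refine sum_mem fun i _ => ?_
    rcases lt_or_ge i.1 0 with hi | hi
    · simp [eq_zero_of_mem_of_fst_neg hsupp hi (gradedProj_mem 𝒜 i b)]
    · exact S.smul_mem _ (hy _ (by simp; omega))

variable {𝒜 ℳ}

theorem posSMulSpan_le_componentsBelowIn (hsupp : ∀ (n : ℤ) (g : G), n < 0 → 𝒜 (n, g) = ⊥)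
    {S N : Submodule A M} {k : ℤ} (h : N ≤ componentsBelowIn ℳ hsupp S k) :
    posSMulSpan 𝒜 N ≤ componentsBelowIn ℳ hsupp S (k + 1) := by
  refine Submodule.span_le.2 ?_
  rintro _ ⟨n, hn, g, a, ha, m, hm, rfl⟩ d hd
  rw [gradedProj_smul_of_mem ha]
  exact S.smul_mem _ (h hm _ (by simp; omega))

/-- Graded Nakayama lemma. -/
theorem le_of_le_sup_posSMulSpan (hsupp : ∀ (n : ℤ) (g : G), n < 0 → 𝒜 (n, g) = ⊥) {n₀ : ℤ}
    (hbdd : ∀ d : ℤ × G, d.1 < n₀ → ℳ d = ⊥) {S N : Submodule A M} (hS : S.IsHomogeneous ℳ)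
    (hN : N.IsHomogeneous ℳ) (h : N ≤ S ⊔ posSMulSpan 𝒜 N) : N ≤ S := by
  have hbelow : ∀ j : ℕ, N ≤ componentsBelowIn ℳ hsupp S (n₀ + j) := by
    intro j
    induction j with
    | zero =>
      intro x _ d hd
      simp [(AddSubgroup.mem_bot).1 (hbdd d (by simpa using hd) ▸ gradedProj_mem ℳ d x)]
    | succ j ih =>
      intro x hx d hd
      obtain ⟨s, hs, t, ht, hst⟩ := Submodule.mem_sup.1 (h (hN d hx))
      have hxd : gradedProj ℳ d x = gradedProj ℳ d s + gradedProj ℳ d t := by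
        rw [← map_add, hst, gradedProj_apply, gradedProj_of_mem_same (SetLike.coe_mem _)]
      rw [hxd]
      exact S.add_mem (hS d hs)
        (posSMulSpan_le_componentsBelowIn hsupp ih ht d (by push_cast at hd ⊢; omega))
  classical
  intro x hx
  rw [← sum_gradedProj ℳ x]
  exact sum_mem fun d _ => hbelow (d.1 - n₀ + 1).toNat hx d (by omega)

theorem eq_bot_of_span_eq_top (hsupp : ∀ (n : ℤ) (g : G), n < 0 → 𝒜 (n, g) = ⊥)
    {T : ℤ × G → Set M} (hT : ∀ e, T e ⊆ ℳ e) (hspan : Submodule.span A (⋃ e, T e) = ⊤)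
    {n₀ : ℤ} (hlow : ∀ e : ℤ × G, e.1 < n₀ → T e ⊆ {0}) (d : ℤ × G) (hd : d.1 < n₀) :
    ℳ d = ⊥ := by
  rw [eq_closure_smulGens 𝒜 hT hspan d, AddSubgroup.closure_eq_bot_iff]
  rintro _ ⟨e, t, ht, a, ha, rfl⟩
  rcases lt_or_ge e.1 n₀ with he | he
  · simp [Set.mem_singleton_iff.1 (hlow e he ht)]
  · simp [eq_zero_of_mem_of_fst_neg hsupp (by simp; omega) ha]

variable (ℳ) in
theorem exists_eq_bot_of_finite [Module.Finite A M]
    (hsupp : ∀ (n : ℤ) (g : G), n < 0 → 𝒜 (n, g) = ⊥) :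
    ∃ n₀ : ℤ, ∀ d : ℤ × G, d.1 < n₀ → ℳ d = ⊥ := by
  classical
  obtain ⟨s, hs⟩ := Module.Finite.fg_top (R := A) (M := M)
  obtain ⟨n₀, hn₀⟩ := ((s.biUnion fun x => (decompose ℳ x).support).image Prod.fst).bddBelow
  refine ⟨n₀, eq_bot_of_span_eq_top hsupp (T := fun e => gradedProj ℳ e '' s)
    (fun e => Set.image_subset_iff.2 fun x _ => gradedProj_mem ℳ e x) ?_ ?_⟩
  · rw [eq_top_iff, ← hs, Submodule.span_le]
    intro x hx
    rw [← sum_gradedProj ℳ x]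
    exact sum_mem fun e _ => Submodule.subset_span (Set.mem_iUnion.2 ⟨e, x, hx, rfl⟩)
  · rintro e he _ ⟨x, hx, rfl⟩
    by_contra hne
    have hmem : e.1 ∈ (s.biUnion fun x => (decompose ℳ x).support).image Prod.fst :=
      Finset.mem_image_of_mem _ (Finset.mem_biUnion.2 ⟨x, hx, by simpa using hne⟩)
    exact absurd (hn₀ hmem) (not_le.2 he)

theorem eq_closure_smul_image (hsupp : ∀ (n : ℤ) (g : G), n < 0 → 𝒜 (n, g) = ⊥)
    {N : Type u} [AddCommGroup N] {𝒩 : ℤ × G → AddSubgroup N} [Decomposition 𝒩] {φ : N →+ M}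
    (hφ : ∀ e x, x ∈ 𝒩 e → φ x ∈ ℳ e) (hspan : Submodule.span A (Set.range φ) = ⊤)
    (ω : ℤ) (g : G) :
    ℳ (ω, g) = AddSubgroup.closure {y | ∃ κ : ℤ, κ ≤ ω ∧ ∃ (h : G) (x : N) (a : A),
      x ∈ 𝒩 (κ, h) ∧ a ∈ 𝒜 (ω - κ, g + -h) ∧ y = a • φ x} := by
  rw [eq_closure_smulGens 𝒜 (T := fun e => φ '' 𝒩 e) (fun e => Set.image_subset_iff.2 (hφ e))
    (by rw [span_iUnion_image_eq, hspan])]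
  refine le_antisymm ((AddSubgroup.closure_le _).2 ?_) ((AddSubgroup.closure_le _).2 ?_)
  · rintro _ ⟨⟨κ, h⟩, _, ⟨x, hx, rfl⟩, a, ha, rfl⟩
    rcases le_or_gt κ ω with hκ | hκ
    · exact AddSubgroup.subset_closure ⟨κ, hκ, h, x, a, hx, by simpa [sub_eq_add_neg] using ha, rfl⟩
    · simp [eq_zero_of_mem_of_fst_neg hsupp (by simpa using hκ) ha]
  · rintro _ ⟨κ, -, h, x, a, hx, ha, rfl⟩
    exact AddSubgroup.subset_closure
      ⟨(κ, h), _, ⟨x, hx, rfl⟩, a, by simpa [sub_eq_add_neg] using ha, rfl⟩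

end NonnegGrading

section CoefficientMap

variable {R P : Type*} [Ring R] [AddCommGroup P] [Module R P]

noncomputable def coeffMap (φ : R →+* R) (s : P →ₗ[R] P →₀ R) : P →ₛₗ[φ] P where
  toFun p := (s p).sum fun x c => φ c • x
  map_add' p q := by
    rw [map_add]
    exact Finsupp.sum_add_index' (by simp) (by simp [add_smul])
  map_smul' b p := by
    rw [map_smul, Finsupp.sum_smul_index' (by simp), Finsupp.smul_sum]
    simp [mul_smul]

theorem sub_coeffMap_apply {s : P →ₗ[R] P →₀ R}
    (hs : Function.LeftInverse (Finsupp.linearCombination R id) s) (φ : R →+* R) (p : P) :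
    p - coeffMap φ s p = (s p).sum fun x c => (c - φ c) • x := by
  nth_rewrite 1 [← hs p]
  simp [coeffMap, Finsupp.linearCombination_apply, sub_smul]

end CoefficientMap

section GradedSection

variable {A G P : Type u} [Ring A] [AddGroup G] [DecidableEq G]
  {𝒜 : ℤ × G → AddSubgroup A}
  [AddCommGroup P] [Module A P] {ℳ : ℤ × G → AddSubgroup P} [Decomposition ℳ]
  [SetLike.GradedSMul 𝒜 ℳ]

theorem gradedPart_smul_of_mem_iSup {f : P →+ P}
    (hf : ∀ g, ∀ a ∈ 𝒜 (0, g), ∀ x, f (a • x) = a • f x) {a : A} (ha : a ∈ ⨆ g, 𝒜 (0, g))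
    (x : P) : gradedPart ℳ f (a • x) = a • gradedPart ℳ f x := by
  refine AddSubgroup.iSup_induction _ (C := fun a => gradedPart ℳ f (a • x) = a • gradedPart ℳ f x)
    ha (fun g a ha => gradedPart_smul_of_mem ha (hf g a ha) x) (by simp) fun a b ha hb => ?_
  simp only [add_smul, map_add, ha, hb]

variable [GradedRing 𝒜]

variable (𝒜 ℳ) in
theorem exists_graded_section [Module.Projective A P]
    (hsupp : ∀ (n : ℤ) (g : G), n < 0 → 𝒜 (n, g) = ⊥)
    (A₀ : Subring A) (hA₀ : A₀.toAddSubgroup = ⨆ g : G, 𝒜 (0, g)) :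
    ∃ σ : (P ⧸ posSMulSubmoduleZG 𝒜 P) →ₗ[A₀] P,
      (∀ p, p - σ (Submodule.Quotient.mk p) ∈ posSMulSubmoduleZG 𝒜 P) ∧
      ∀ d x, x ∈ ℳ d → σ (Submodule.Quotient.mk x) ∈ ℳ d := by
  obtain ⟨s, hs⟩ := Module.Projective.out (R := A) (P := P)
  have hJ : (posSMulSubmoduleZG 𝒜 P).IsHomogeneous ℳ :=
    posSMulSpan_top 𝒜 (M := P) ▸ isHomogeneous_posSMulSpan 𝒜 ℳ fun _ _ _ => trivial
  set J := posSMulSubmoduleZG 𝒜 P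
  set Λ := coeffMap (projZeroRingHom 𝒜 hsupp) s
  have hJΛ : J ≤ LinearMap.ker Λ := by
    refine Submodule.span_le.2 ?_
    rintro _ ⟨n, hn, g, a, ha, m, rfl⟩
    simp [projZero_of_mem ha, hn.ne']
  have hΛ : ∀ p, p - Λ p ∈ J := fun p => by
    rw [sub_coeffMap_apply hs]
    exact sum_mem fun x _ => sub_projZero_smul_mem 𝒜 hsupp _ x
  let τ : P →ₗ[A₀] P :=
    { toFun := gradedPart ℳ Λ.toAddMonoidHom
      map_add' := map_add _
      map_smul' := fun a p => gradedPart_smul_of_mem_iSup (𝒜 := 𝒜) (a := a)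
        (fun g b hb x => by simp [projZero_of_mem hb]) (by rw [← hA₀]; exact a.2) p }
  refine ⟨(J.restrictScalars A₀).liftQ τ ?_ ∘ₗ (Submodule.Quotient.restrictScalarsEquiv A₀ J).symm,
    fun p => sub_gradedPart_mem hJ hΛ p, fun d x hx => gradedPart_mem _ hx⟩
  exact fun y hy => gradedPart_eq_zero hJ (fun x hx => LinearMap.mem_ker.1 (hJΛ hx)) hy

end GradedSection

theorem IsBaseChangeAlong.span_range_eq_top {A : Type u} [Ring A] {A₀ : Subring A} {Q : Type u}
    [AddCommGroup Q] [Module A₀ Q] {E : Type u} [AddCommGroup E] [Module A E] {ι : Q →ₗ[A₀] E}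
    (h : IsBaseChangeAlong A A₀ Q E ι) : Submodule.span A (Set.range ι) = ⊤ := by
  set S := Submodule.span A (Set.range ι)
  obtain ⟨F, -, huniq⟩ := h (E ⧸ S) ((S.mkQ.restrictScalars A₀).comp ι)
  have hmkQ : S.mkQ = 0 := (huniq _ fun q => rfl).trans (huniq 0 fun q =>
    ((Submodule.Quotient.mk_eq_zero S).2 (Submodule.subset_span ⟨q, rfl⟩)).symm).symm
  rw [Submodule.eq_top_iff']
  intro x
  simpa using LinearMap.congr_fun hmkQ x

theorem exists_sub_mem_posSMulSubmoduleZG {A G E : Type u} [Ring A] [AddGroup G] [DecidableEq G]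
    {𝒜 : ℤ × G → AddSubgroup A} [GradedRing 𝒜] [AddCommGroup E] [Module A E]
    (hsupp : ∀ (n : ℤ) (g : G), n < 0 → 𝒜 (n, g) = ⊥) {A₀ : Subring A}
    (hA₀ : A₀.toAddSubgroup = ⨆ g : G, 𝒜 (0, g)) {Q : Type u} [AddCommGroup Q] [Module A₀ Q]
    {ι : Q →ₗ[A₀] E} (hι : Submodule.span A (Set.range ι) = ⊤) (x : E) :
    ∃ q, x - ι q ∈ posSMulSubmoduleZG 𝒜 E := by
  let S : Submodule A E :=
    { carrier := {x | ∃ q, x - ι q ∈ posSMulSubmoduleZG 𝒜 E}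
      add_mem' := fun ⟨q, hq⟩ ⟨q', hq'⟩ =>
        ⟨q + q', by simpa [add_sub_add_comm] using add_mem hq hq'⟩
      zero_mem' := ⟨0, by simp⟩
      smul_mem' := fun a x ⟨q, hq⟩ => by
        refine ⟨(⟨projZero 𝒜 a, projZero_mem 𝒜 A₀ hA₀ a⟩ : A₀) • q, ?_⟩
        have h : a • x - projZero 𝒜 a • ι q = a • (x - ι q) + (a - projZero 𝒜 a) • ι q := by
          rw [smul_sub, sub_smul]; abel
        rw [map_smul, Subring.smul_def, h]
        exact add_mem (Submodule.smul_mem _ a hq) (sub_projZero_smul_mem 𝒜 hsupp a _) }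
  have hS : Submodule.span A (Set.range ι) ≤ S :=
    Submodule.span_le.2 fun _ ⟨q, hq⟩ => ⟨q, by simp [hq]⟩
  exact (hι ▸ hS) trivial

section BaseChange

variable {A G P E : Type u} [Ring A] [AddGroup G] {𝒜 : ℤ × G → AddSubgroup A}
  [AddCommGroup P] [Module A P] [AddCommGroup E] [Module A E]
  {A₀ : Subring A} {ι : (P ⧸ posSMulSubmoduleZG 𝒜 P) →ₗ[A₀] E}

variable (ι) in
def baseChangeMk : P →+ E :=
  ι.toAddMonoidHom.comp (posSMulSubmoduleZG 𝒜 P).mkQ.toAddMonoidHom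

@[simp]
theorem baseChangeMk_apply (x : P) : baseChangeMk ι x = ι (Submodule.Quotient.mk x) :=
  rfl

theorem span_range_baseChangeMk (hι : Submodule.span A (Set.range ι) = ⊤) :
    Submodule.span A (Set.range (baseChangeMk ι)) = ⊤ := by
  rwa [baseChangeMk, AddMonoidHom.coe_comp, Set.range_comp, LinearMap.toAddMonoidHom_coe,
    LinearMap.toAddMonoidHom_coe, (Submodule.mkQ_surjective _).range_eq, Set.image_univ]

variable [DecidableEq G] [GradedRing 𝒜] {ℳ : ℤ × G → AddSubgroup P} [Decomposition ℳ]
  {ℰ : ℤ × G → AddSubgroup E} [Decomposition ℰ]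

theorem surjective_of_le_range_sup [SetLike.GradedSMul 𝒜 ℳ]
    (hsupp : ∀ (n : ℤ) (g : G), n < 0 → 𝒜 (n, g) = ⊥) {n₀ : ℤ}
    (hP : ∀ d : ℤ × G, d.1 < n₀ → ℳ d = ⊥) {F : E →ₗ[A] P} (hF : ∀ d y, y ∈ ℰ d → F y ∈ ℳ d)
    (hcover : ∀ p, ∃ y, p - F y ∈ posSMulSubmoduleZG 𝒜 P) : Function.Surjective F := by
  refine LinearMap.range_eq_top.1 (eq_top_iff.2 (le_of_le_sup_posSMulSpan hsupp hP
    (LinearMap.isHomogeneous_range hF) (fun _ _ _ => trivial) fun p _ => ?_))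
  obtain ⟨y, hy⟩ := hcover p
  exact Submodule.mem_sup.2
    ⟨F y, ⟨y, rfl⟩, p - F y, posSMulSpan_top 𝒜 (M := P) ▸ hy, add_sub_cancel _ _⟩

theorem injective_of_ker_le [SetLike.GradedSMul 𝒜 ℰ] [Module.Projective A P]
    (hsupp : ∀ (n : ℤ) (g : G), n < 0 → 𝒜 (n, g) = ⊥) {n₀ : ℤ}
    (hE : ∀ d : ℤ × G, d.1 < n₀ → ℰ d = ⊥) {F : E →ₗ[A] P} (hF : ∀ d y, y ∈ ℰ d → F y ∈ ℳ d)
    (hsurj : Function.Surjective F) (hker : LinearMap.ker F ≤ posSMulSubmoduleZG 𝒜 E) :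
    Function.Injective F := by
  obtain ⟨s, hs⟩ := Module.projective_lifting_property F LinearMap.id hsurj
  -- `π` projects onto `ker F`, so `ker F = π (ker F) ⊆ π (A₊E) ⊆ A₊ (ker F)`.
  let π := LinearMap.id - s ∘ₗ F
  have hπ : (⊤ : Submodule A E).map π ≤ LinearMap.ker F := by
    rintro _ ⟨x, -, rfl⟩
    simp [π, ← LinearMap.comp_apply F s, hs]
  rw [← LinearMap.ker_eq_bot, eq_bot_iff]
  refine le_of_le_sup_posSMulSpan hsupp hE (fun _ _ hx => by simp [(Submodule.mem_bot A).1 hx])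
    (LinearMap.isHomogeneous_ker hF) fun x hx => ?_
  have hπx : π x = x := by simp [π, LinearMap.mem_ker.1 hx]
  rw [← hπx]
  exact Submodule.mem_sup_right (map_posSMulSpan_le 𝒜 π hπ
    (Submodule.mem_map_of_mem (posSMulSpan_top 𝒜 (M := E) ▸ hker hx)))

theorem ker_le_posSMulSubmoduleZG (hsupp : ∀ (n : ℤ) (g : G), n < 0 → 𝒜 (n, g) = ⊥)
    (hA₀ : A₀.toAddSubgroup = ⨆ g : G, 𝒜 (0, g)) (hι : Submodule.span A (Set.range ι) = ⊤)
    {σ : (P ⧸ posSMulSubmoduleZG 𝒜 P) →ₗ[A₀] P}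
    (hσ : ∀ p, p - σ (Submodule.Quotient.mk p) ∈ posSMulSubmoduleZG 𝒜 P)
    {F : E →ₗ[A] P} (hF : ∀ q, F (ι q) = σ q) :
    LinearMap.ker F ≤ posSMulSubmoduleZG 𝒜 E := by
  intro x hx
  obtain ⟨q, hq⟩ := exists_sub_mem_posSMulSubmoduleZG hsupp hA₀ hι x
  obtain ⟨p, rfl⟩ := Submodule.Quotient.mk_surjective _ q
  have hFq : -σ (Submodule.Quotient.mk p) ∈ posSMulSubmoduleZG 𝒜 P := by
    have := map_posSMulSpan_le 𝒜 F (N := ⊤) (N' := ⊤) le_top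
      (Submodule.mem_map_of_mem (posSMulSpan_top 𝒜 (M := E) ▸ hq))
    rwa [posSMulSpan_top, map_sub, LinearMap.mem_ker.1 hx, hF, zero_sub] at this
  have hp : Submodule.Quotient.mk p = (0 : P ⧸ posSMulSubmoduleZG 𝒜 P) :=
    (Submodule.Quotient.mk_eq_zero _).2 (by simpa using sub_mem (hσ p) hFq)
  simpa [hp] using hq

theorem exists_gradedEquiv_of_isBaseChangeAlong [SetLike.GradedSMul 𝒜 ℳ]
    [SetLike.GradedSMul 𝒜 ℰ] [Module.Finite A P] [Module.Projective A P]
    (hsupp : ∀ (n : ℤ) (g : G), n < 0 → 𝒜 (n, g) = ⊥)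
    (hA₀ : A₀.toAddSubgroup = ⨆ g : G, 𝒜 (0, g)) (hι : ∀ d x, x ∈ ℳ d → baseChangeMk ι x ∈ ℰ d)
    (hE : IsBaseChangeAlong A A₀ (P ⧸ posSMulSubmoduleZG 𝒜 P) E ι) :
    ∃ e : E ≃ₗ[A] P, ∀ d y, y ∈ ℰ d → e y ∈ ℳ d := by
  classical
  obtain ⟨σ, hσ_sub, hσ_mem⟩ := exists_graded_section 𝒜 ℳ hsupp A₀ hA₀
  obtain ⟨F, hF, -⟩ := hE P σ
  have hι_span := hE.span_range_eq_top
  have hT : ∀ d, baseChangeMk ι '' ℳ d ⊆ ℰ d := fun d => Set.image_subset_iff.2 (hι d)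
  have hT_span : Submodule.span A (⋃ d, baseChangeMk ι '' ℳ d) = ⊤ :=
    (span_iUnion_image_eq ℳ _).trans (span_range_baseChangeMk hι_span)
  have hF_mem : ∀ d y, y ∈ ℰ d → F y ∈ ℳ d := fun d y hy =>
    LinearMap.apply_mem_of_mem_closure_smulGens
      (by rintro e _ ⟨x, hx, rfl⟩; exact hF _ ▸ hσ_mem e x hx)
      (eq_closure_smulGens 𝒜 hT hT_span d ▸ hy)
  obtain ⟨n₀, hP⟩ := exists_eq_bot_of_finite ℳ hsupp
  have hE_bot : ∀ d : ℤ × G, d.1 < n₀ → ℰ d = ⊥ := eq_bot_of_span_eq_top hsupp hT hT_span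
    fun e he => by rintro _ ⟨x, hx, rfl⟩; simp [(AddSubgroup.mem_bot).1 (hP e he ▸ hx)]
  have hsurj := surjective_of_le_range_sup hsupp hP hF_mem fun p =>
    ⟨ι (Submodule.Quotient.mk p), hF _ ▸ hσ_sub p⟩
  have hinj := injective_of_ker_le hsupp hE_bot hF_mem hsurj
    (ker_le_posSMulSubmoduleZG hsupp hA₀ hι_span hσ_sub hF)
  exact ⟨LinearEquiv.ofBijective F ⟨hinj, hsurj⟩, hF_mem⟩

end BaseChange

/-- Let `G` be a group and `A` a `(ℤ × G)`-graded ring with support in `ℕ × G`, with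
subring `A₍₀,₋₎ = ⊕_g A_{(0,g)}`. Every finitely generated `(ℤ × G)`-graded projective
`A`-module `P` is graded-isomorphic to `T(P) ⊗_{A₍₀,₋₎} A` where `T(P) = P/P·A₊` (the
tensor product being encoded by a graded base change `E` of `T(P)`); moreover
componentwise `P_{(ω,g)} ≅ ⊕_{κ≤ω, h} T(P)_{(κ,h)} ⊗ A_{(ω−κ, −h+g)}`, i.e. the
degree-`(ω,g)` component is generated by the images of `a • ι(t)` with `t` the class of
an element of `P_{(κ,h)}`, `κ ≤ ω`, and `a ∈ A_{(ω−κ, g−h)}`. -/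
theorem graded_projective_extended_ZG (A : Type u) [Ring A] (G : Type u) [AddGroup G]
    [DecidableEq G] (𝒜 : ℤ × G → AddSubgroup A) [GradedRing 𝒜]
    (hsupp : ∀ (n : ℤ) (g : G), n < 0 → 𝒜 (n, g) = ⊥)
    (A₀ : Subring A) (hA₀ : A₀.toAddSubgroup = ⨆ g : G, 𝒜 (0, g))
    (P : Type u) [AddCommGroup P] [Module A P] (ℳ : ℤ × G → AddSubgroup P)
    [DirectSum.Decomposition ℳ] [SetLike.GradedSMul 𝒜 ℳ]
    [Module.Finite A P] [Module.Projective A P]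
    (E : Type u) [AddCommGroup E] [Module A E] (ℰ : ℤ × G → AddSubgroup E)
    [DirectSum.Decomposition ℰ] [SetLike.GradedSMul 𝒜 ℰ]
    (ι : (P ⧸ posSMulSubmoduleZG 𝒜 P) →ₗ[A₀] E)
    (hι : ∀ (κ : ℤ) (h : G) (x : P), x ∈ ℳ (κ, h) →
      ι (Submodule.Quotient.mk x) ∈ ℰ (κ, h))
    (hE : IsBaseChangeAlong A A₀ (P ⧸ posSMulSubmoduleZG 𝒜 P) E ι) :
    ∃ e : E ≃ₗ[A] P,
      (∀ d : ℤ × G, (ℰ d).map e.toLinearMap.toAddMonoidHom = ℳ d) ∧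
      ∀ (ω : ℤ) (g : G), ℳ (ω, g) = AddSubgroup.closure
        {p : P | ∃ κ : ℤ, κ ≤ ω ∧ ∃ (h : G) (x : P) (a : A), x ∈ ℳ (κ, h) ∧
          a ∈ 𝒜 (ω - κ, g + -h) ∧ p = e (a • ι (Submodule.Quotient.mk x))} := by
  have hι' : ∀ d x, x ∈ ℳ d → baseChangeMk ι x ∈ ℰ d := fun d x hx => hι d.1 d.2 x hx
  obtain ⟨e, he⟩ := exists_gradedEquiv_of_isBaseChangeAlong hsupp hA₀ hι' hE
  have hmap := e.map_eq_of_apply_mem he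
  refine ⟨e, hmap, fun ω g => ?_⟩
  rw [← hmap, eq_closure_smul_image hsupp hι' (span_range_baseChangeMk hE.span_range_eq_top) ω g,
    AddMonoidHom.map_closure]
  congr 1
  ext p
  simp [eq_comm, and_assoc]
end

section
/- Let A be a ring, A₀ a subring with ring retraction π : A → A₀, A₊ = ker π, satisfying: every finitely generated right A-module M with M·A₊ = M is zero. Let 0 → K → Q → P → 0 be an exact sequence of right A-modules with Q finitely generated and P projective, such that the induced map K ⊗_A A₀ → Q ⊗_A A₀ is zero and Q ⊗_A A₀ → P ⊗_A A₀ is an isomorphism. Then K = 0 and Q → P is an isomorphism. -/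
universe u

/-- The submodule `N·A₊` (for left modules: `A₊·N`), where `A₊ = ker π`. -/
def kerSMulSubmodule {A : Type u} [Ring A] {A₀ : Subring A} (π : A →+* A₀)
    (N : Type u) [AddCommGroup N] [Module A N] : Submodule A N :=
  Submodule.span A {x : N | ∃ a ∈ RingHom.ker π, ∃ m : N, x = a • m}

/-- The functor `T = - ⊗_A A₀`, i.e. `M ↦ M/M·A₊`, applied to a linear map. -/
def inducedT {A : Type u} [Ring A] {A₀ : Subring A} (π : A →+* A₀)
    {E P : Type u} [AddCommGroup E] [Module A E] [AddCommGroup P] [Module A P]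
    (ψ : E →ₗ[A] P) :
    (E ⧸ kerSMulSubmodule π E) →ₗ[A] P ⧸ kerSMulSubmodule π P :=
  Submodule.mapQ _ _ ψ (by
    refine Submodule.span_le.2 ?_
    rintro x ⟨a, ha, m, rfl⟩
    refine Submodule.mem_comap.2 ?_
    rw [map_smul]
    exact Submodule.subset_span ⟨a, ha, ψ m, rfl⟩)

/-! Projectivity of `P` splits the sequence, so `K` is a retract of `Q`. Hence `K`
is finitely generated, and applying the retraction to `K ⊆ Q·A₊` gives `K ⊆ K·A₊`; the
Nakayama-type hypothesis then kills `K`, and exactness makes `Q → P` injective. -/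

theorem Function.Exact.exists_retraction_of_projective {R M N P : Type*} [Ring R]
    [AddCommGroup M] [Module R M] [AddCommGroup N] [Module R N] [AddCommGroup P] [Module R P]
    [Module.Projective R P] {f : M →ₗ[R] N} {g : N →ₗ[R] P} (h : Function.Exact f g)
    (hf : Function.Injective f) (hg : Function.Surjective g) :
    ∃ r : N →ₗ[R] M, r ∘ₗ f = LinearMap.id :=
  ((h.split_tfae hf hg).out 0 1).1 (Module.projective_lifting_property g LinearMap.id hg)

section

variable {A : Type u} [Ring A] {A₀ : Subring A} (π : A →+* A₀)
  {M N : Type u} [AddCommGroup M] [Module A M] [AddCommGroup N] [Module A N]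

theorem map_kerSMulSubmodule_le (f : M →ₗ[A] N) :
    (kerSMulSubmodule π M).map f ≤ kerSMulSubmodule π N := by
  rw [kerSMulSubmodule, Submodule.map_span, Submodule.span_le]
  rintro _ ⟨_, ⟨a, ha, m, rfl⟩, rfl⟩
  exact Submodule.subset_span ⟨a, ha, f m, map_smul f a m⟩

theorem kerSMulSubmodule_eq_top_of_retraction {i : M →ₗ[A] N} {r : N →ₗ[A] M}
    (hri : r ∘ₗ i = LinearMap.id) (hi : LinearMap.range i ≤ kerSMulSubmodule π N) :
    kerSMulSubmodule π M = ⊤ := by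
  refine eq_top_iff.2 fun m _ => ?_
  have hmem : r (i m) ∈ (kerSMulSubmodule π N).map r :=
    Submodule.mem_map_of_mem (hi (LinearMap.mem_range_self i m))
  rw [show r (i m) = m from LinearMap.congr_fun hri m] at hmem
  exact map_kerSMulSubmodule_le π r hmem

end

theorem ses_step_general (A : Type u) [Ring A] (A₀ : Subring A) (π : A →+* A₀)
    (hNak : ∀ (M : Type u) [AddCommGroup M] [Module A M], Module.Finite A M →
      kerSMulSubmodule π M = ⊤ → Subsingleton M)
    (K Q P : Type u) [AddCommGroup K] [Module A K] [AddCommGroup Q] [Module A Q]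
    [AddCommGroup P] [Module A P]
    [Module.Finite A Q] [Module.Projective A P]
    (i : K →ₗ[A] Q) (p : Q →ₗ[A] P)
    (hi : Function.Injective i) (hp : Function.Surjective p)
    (hex : LinearMap.range i = LinearMap.ker p)
    (hT0 : LinearMap.range i ≤ kerSMulSubmodule π Q) :
    Subsingleton K ∧ Function.Bijective p := by
  obtain ⟨r, hri⟩ :=
    (LinearMap.exact_iff.2 hex.symm).exists_retraction_of_projective hi hp
  have : Module.Finite A K :=
    Module.Finite.of_surjective r (Function.LeftInverse.surjective (LinearMap.congr_fun hri))
  have hK : Subsingleton K := hNak K this (kerSMulSubmodule_eq_top_of_retraction π hri hT0)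
  refine ⟨hK, ?_, hp⟩
  rw [← LinearMap.ker_eq_bot, ← hex, LinearMap.range_eq_bot]
  exact Subsingleton.elim _ _

/-- Let `π : A → A₀` be a ring retraction onto a subring, `A₊ = ker π`, and suppose every
finitely generated `A`-module `M` with `M·A₊ = M` is zero. Let `0 → K → Q → P → 0` be an
exact sequence of `A`-modules with `Q` finitely generated and `P` projective, such that
the induced map `T(K) → T(Q)` is zero (i.e. the image of `K` lies in `Q·A₊`) and
`T(Q) → T(P)` is an isomorphism, where `T = − ⊗_A A₀ ≅ −/(−·A₊)`. Then `K = 0` and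
`Q → P` is an isomorphism. -/
theorem ses_step (A : Type u) [Ring A] (A₀ : Subring A) (π : A →+* A₀)
    (hπ : ∀ x : A₀, π (x : A) = x)
    (hNak : ∀ (M : Type u) [AddCommGroup M] [Module A M], Module.Finite A M →
      kerSMulSubmodule π M = ⊤ → Subsingleton M)
    (K Q P : Type u) [AddCommGroup K] [Module A K] [AddCommGroup Q] [Module A Q]
    [AddCommGroup P] [Module A P]
    [Module.Finite A Q] [Module.Projective A P]
    (i : K →ₗ[A] Q) (p : Q →ₗ[A] P)
    (hi : Function.Injective i) (hp : Function.Surjective p)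
    (hex : LinearMap.range i = LinearMap.ker p)
    (hT0 : LinearMap.range i ≤ kerSMulSubmodule π Q)
    (hTiso : Function.Bijective (inducedT π p)) :
    Subsingleton K ∧ Function.Bijective p :=
  ses_step_general A A₀ π hNak K Q P i p hi hp hex hT0
end
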